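/- Let H(ℓ, r) be the disjoint union of two unit-weight cliques of sizes ℓ and r. Any hierarchical clustering T of H(ℓ, r) whose top split partitions the cliques as (ℓ₁ + r₁, ℓ₂ + r₂) (with ℓ₁ + ℓ₂ = ℓ, r₁ + r₂ = r) satisfies cost(T) ≥ (ℓ³ − ℓ)/3 + (r³ − r)/3 + ℓ₁·ℓ₂·r + r₁·r₂·ℓ. -/

import Mathlib

/-!
Restricted to the pairs inside a set of `k` leaves, every tree costs at least `(k³ - k) / 3`:
where the set is split into parts of sizes `a` and `b`, each of the `a * b` crossing pairs pays at
least `a + b`, and `(a + b)³ - (a + b) = (a³ - a) + (b³ - b) + 3ab(a + b)`. At the root of `T` the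
`ℓ₁ℓ₂` crossing pairs of the first clique pay the whole `ℓ + r` rather than `ℓ`, which is the
surplus `ℓ₁ℓ₂r`; likewise `r₁r₂ℓ` for the second clique.
-/

open Finset

/-- A rooted binary tree whose leaves are labeled by elements of `Fin n`. -/
inductive HTree (n : ℕ) : Type where
  | leaf : Fin n → HTree n
  | node : HTree n → HTree n → HTree n

namespace HTree

variable {n : ℕ}

/-- The list of leaf labels, left to right. -/
def leafList : HTree n → List (Fin n)
  | .leaf v => [v]
  | .node l r => l.leafList ++ r.leafList

/-- The set of leaf labels of a tree. -/
def leaves (T : HTree n) : Finset (Fin n) := T.leafList.toFinset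

/-- `T` is a hierarchical clustering tree of the whole vertex set `Fin n`:
its leaves are in one-to-one correspondence with `Fin n`. -/
def IsFullTree (T : HTree n) : Prop := T.leafList.Nodup ∧ T.leaves = Finset.univ

/-- `|leaves(T[i ∨ j])|`: the number of leaves of the subtree rooted at the
lowest common ancestor of leaves `i` and `j`. -/
def lcaSize : HTree n → Fin n → Fin n → ℕ
  | .leaf _, _, _ => 1
  | .node l r, i, j =>
    if i ∈ l.leaves ∧ j ∈ l.leaves then l.lcaSize i j
    else if i ∈ r.leaves ∧ j ∈ r.leaves then r.lcaSize i j
    else (l.leaves ∪ r.leaves).card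

/-- `cost_G(T) = Σ_{{i,j}} w_{ij} |leaves(T[i ∨ j])|`, the sum being over
unordered pairs (represented as ordered pairs `p.1 < p.2`). -/
def pairCost (w : Fin n → Fin n → ℝ) (T : HTree n) : ℝ :=
  ∑ p ∈ Finset.univ.filter (fun p : Fin n × Fin n => p.1 < p.2),
    w p.1 p.2 * (T.lcaSize p.1 p.2 : ℝ)

/-- `w(A, B)`: total weight of edges between `A` and `B`. -/
def cut (w : Fin n → Fin n → ℝ) (A B : Finset (Fin n)) : ℝ :=
  ∑ i ∈ A, ∑ j ∈ B, w i j

/-- The sum-of-splits formulation of the cost: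
`Σ over internal splits S → (S₁,S₂) of |S| ⬝ w(S₁,S₂)`. -/
def splitCost (w : Fin n → Fin n → ℝ) : HTree n → ℝ
  | .leaf _ => 0
  | .node l r =>
      ((l.leaves ∪ r.leaves).card : ℝ) * cut w l.leaves r.leaves
        + splitCost w l + splitCost w r

/-- `Subtree t T`: `t` occurs as a subtree of `T`. -/
inductive Subtree : HTree n → HTree n → Prop
  | refl (t : HTree n) : Subtree t t
  | left {t l r : HTree n} : Subtree t l → Subtree t (.node l r)
  | right {t l r : HTree n} : Subtree t r → Subtree t (.node l r)

end HTree

namespace Finset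

variable {α β : Type*} [AddCommMonoid β]

theorem sum_offDiag_union [DecidableEq α] {s t : Finset α} (h : Disjoint s t) (f : α × α → β) :
    ∑ p ∈ (s ∪ t).offDiag, f p =
      ∑ p ∈ s.offDiag, f p + ∑ p ∈ t.offDiag, f p + ∑ p ∈ s ×ˢ t, f p + ∑ p ∈ t ×ˢ s, f p := by
  rw [offDiag_union h, sum_union, sum_union, sum_union] <;>
    simp only [disjoint_left, mem_union, mem_offDiag, mem_product, Prod.forall] <;>
    grind [disjoint_left.1 h]

theorem sum_offDiag_eq_two_nsmul_sum_lt [LinearOrder α] (s : Finset α) {f : α → α → β}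
    (hf : ∀ i j, f i j = f j i) :
    ∑ p ∈ s.offDiag, f p.1 p.2 = 2 • ∑ p ∈ s.offDiag with p.1 < p.2, f p.1 p.2 := by
  rw [← sum_filter_add_sum_filter_not s.offDiag (fun p => p.1 < p.2), two_nsmul]
  congr 1
  refine sum_nbij' Prod.swap Prod.swap ?_ ?_ (fun _ _ => rfl) (fun _ _ => rfl)
    (fun p _ => hf _ _) <;>
  · intro p hp
    simp only [mem_filter, mem_offDiag, Prod.fst_swap, Prod.snd_swap] at hp ⊢
    grind

end Finset

namespace HTree

variable {n : ℕ}

@[simp]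
theorem leaves_node (l r : HTree n) : (node l r).leaves = l.leaves ∪ r.leaves := by
  simp [leaves, leafList]

theorem nodup_leafList_node {l r : HTree n} :
    (node l r).leafList.Nodup ↔
      l.leafList.Nodup ∧ r.leafList.Nodup ∧ Disjoint l.leaves r.leaves := by
  rw [leafList, List.nodup_append', leaves, leaves, List.disjoint_toFinset_iff_disjoint]

theorem lcaSize_comm (t : HTree n) (i j : Fin n) : t.lcaSize i j = t.lcaSize j i := by
  induction t with
  | leaf v => rfl
  | node l r ihl ihr => simp only [lcaSize, ihl, ihr, and_comm]

theorem lcaSize_node_left {l r : HTree n} {i j : Fin n} (hi : i ∈ l.leaves) (hj : j ∈ l.leaves) :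
    (node l r).lcaSize i j = l.lcaSize i j := by
  simp [lcaSize, hi, hj]

theorem lcaSize_node_right {l r : HTree n} (hd : Disjoint l.leaves r.leaves) {i j : Fin n}
    (hi : i ∈ r.leaves) (hj : j ∈ r.leaves) : (node l r).lcaSize i j = r.lcaSize i j := by
  simp [lcaSize, hi, hj, disjoint_right.1 hd hi]

theorem lcaSize_node_of_mem_left_of_mem_right {l r : HTree n} (hd : Disjoint l.leaves r.leaves)
    {i j : Fin n} (hi : i ∈ l.leaves) (hj : j ∈ r.leaves) :
    (node l r).lcaSize i j = #(l.leaves ∪ r.leaves) := by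
  simp [lcaSize, disjoint_right.1 hd hj, disjoint_left.1 hd hi]

theorem sum_offDiag_lcaSize_node {l r : HTree n} (hd : Disjoint l.leaves r.leaves)
    (S : Finset (Fin n)) :
    ∑ p ∈ (S ∩ (node l r).leaves).offDiag, (node l r).lcaSize p.1 p.2 =
      ∑ p ∈ (S ∩ l.leaves).offDiag, l.lcaSize p.1 p.2
        + ∑ p ∈ (S ∩ r.leaves).offDiag, r.lcaSize p.1 p.2
        + 2 * (#(S ∩ l.leaves) * #(S ∩ r.leaves) * #(l.leaves ∪ r.leaves)) := by
  rw [leaves_node, inter_union_distrib_left,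
    sum_offDiag_union (hd.mono inter_subset_right inter_subset_right)]
  have hleft : ∀ p ∈ (S ∩ l.leaves).offDiag,
      (node l r).lcaSize p.1 p.2 = l.lcaSize p.1 p.2 := fun p hp => by
    simp only [mem_offDiag, mem_inter] at hp
    exact lcaSize_node_left hp.1.2 hp.2.1.2
  have hright : ∀ p ∈ (S ∩ r.leaves).offDiag,
      (node l r).lcaSize p.1 p.2 = r.lcaSize p.1 p.2 := fun p hp => by
    simp only [mem_offDiag, mem_inter] at hp
    exact lcaSize_node_right hd hp.1.2 hp.2.1.2
  have hlr : ∀ p ∈ (S ∩ l.leaves) ×ˢ (S ∩ r.leaves),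
      (node l r).lcaSize p.1 p.2 = #(l.leaves ∪ r.leaves) := fun p hp => by
    simp only [mem_product, mem_inter] at hp
    exact lcaSize_node_of_mem_left_of_mem_right hd hp.1.2 hp.2.2
  have hrl : ∀ p ∈ (S ∩ r.leaves) ×ˢ (S ∩ l.leaves),
      (node l r).lcaSize p.1 p.2 = #(l.leaves ∪ r.leaves) := fun p hp => by
    simp only [mem_product, mem_inter] at hp
    rw [lcaSize_comm]
    exact lcaSize_node_of_mem_left_of_mem_right hd hp.2.2 hp.1.2
  rw [sum_congr rfl hleft, sum_congr rfl hright, sum_congr rfl hlr, sum_congr rfl hrl]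
  simp only [sum_const, card_product, smul_eq_mul]
  ring

theorem two_mul_card_pow_three_le_sum_offDiag_lcaSize {t : HTree n} (ht : t.leafList.Nodup)
    (S : Finset (Fin n)) :
    2 * #(S ∩ t.leaves) ^ 3 ≤
      3 * ∑ p ∈ (S ∩ t.leaves).offDiag, t.lcaSize p.1 p.2 + 2 * #(S ∩ t.leaves) := by
  induction t with
  | leaf v =>
    have hk : #(S ∩ (leaf v).leaves) ≤ 1 :=
      (card_le_card inter_subset_right).trans (List.toFinset_card_le _)
    have : #(S ∩ (leaf v).leaves) ^ 3 ≤ #(S ∩ (leaf v).leaves) := by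
      interval_cases #(S ∩ (leaf v).leaves) <;> norm_num
    omega
  | node l r ihl ihr =>
    obtain ⟨hl, hr, hd⟩ := nodup_leafList_node.1 ht
    have hcard : #(S ∩ (node l r).leaves) = #(S ∩ l.leaves) + #(S ∩ r.leaves) := by
      rw [leaves_node, inter_union_distrib_left,
        card_union_of_disjoint (hd.mono inter_subset_right inter_subset_right)]
    have hN : #(S ∩ l.leaves) + #(S ∩ r.leaves) ≤ #(l.leaves ∪ r.leaves) := by
      rw [← hcard, ← leaves_node]
      exact card_le_card inter_subset_right
    rw [sum_offDiag_lcaSize_node hd, hcard]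
    nlinarith [ihl hl, ihr hr, Nat.mul_le_mul_left (#(S ∩ l.leaves) * #(S ∩ r.leaves)) hN]

theorem card_pow_three_sub_add_le_sum_lcaSize_node {l r : HTree n}
    (h : (node l r).leafList.Nodup) {S : Finset (Fin n)} (hS : S ⊆ (node l r).leaves) :
    ((#S : ℝ) ^ 3 - #S) / 3 + #(S ∩ l.leaves) * #(S ∩ r.leaves) * (#(l.leaves ∪ r.leaves) - #S) ≤
      ∑ p ∈ S.offDiag with p.1 < p.2, ((node l r).lcaSize p.1 p.2 : ℝ) := by
  obtain ⟨hl, hr, hd⟩ := nodup_leafList_node.1 h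
  have hsplit := sum_offDiag_lcaSize_node hd S
  rw [inter_eq_left.2 hS, sum_offDiag_eq_two_nsmul_sum_lt S (lcaSize_comm _)] at hsplit
  have hcard : #S = #(S ∩ l.leaves) + #(S ∩ r.leaves) := by
    rw [← card_union_of_disjoint (hd.mono inter_subset_right inter_subset_right),
      ← inter_union_distrib_left, ← leaves_node, inter_eq_left.2 hS]
  have hl3 := two_mul_card_pow_three_le_sum_offDiag_lcaSize hl S
  have hr3 := two_mul_card_pow_three_le_sum_offDiag_lcaSize hr S
  rw [← Nat.cast_sum, hcard]
  rify [smul_eq_mul] at hsplit hl3 hr3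
  push_cast
  linarith

theorem pairCost_disjoint_cliques (P Q : Fin n → Prop) [DecidablePred P] [DecidablePred Q]
    (hPQ : ∀ i, P i → ¬ Q i) (T : HTree n) :
    T.pairCost (fun i j => if i ≠ j ∧ (P i ∧ P j ∨ Q i ∧ Q j) then 1 else 0) =
      ∑ p ∈ ({i | P i} : Finset (Fin n)).offDiag with p.1 < p.2, (T.lcaSize p.1 p.2 : ℝ)
        + ∑ p ∈ ({i | Q i} : Finset (Fin n)).offDiag with p.1 < p.2, (T.lcaSize p.1 p.2 : ℝ) := by
  have hsummand : ∀ p ∈ ({p | p.1 < p.2} : Finset (Fin n × Fin n)),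
      (if p.1 ≠ p.2 ∧ (P p.1 ∧ P p.2 ∨ Q p.1 ∧ Q p.2) then (1 : ℝ) else 0) * T.lcaSize p.1 p.2 =
        (if P p.1 ∧ P p.2 then (T.lcaSize p.1 p.2 : ℝ) else 0)
          + if Q p.1 ∧ Q p.2 then (T.lcaSize p.1 p.2 : ℝ) else 0 := fun p hp => by
    have hne := (mem_filter.1 hp).2.ne
    have := hPQ p.1
    split_ifs <;> simp_all
  rw [pairCost, sum_congr rfl hsummand, sum_add_distrib, ← sum_filter, ← sum_filter]
  congr 2 <;> ext p <;> simp only [mem_filter, mem_offDiag, mem_univ, true_and] <;>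
    grind

end HTree

/-- Any hierarchical clustering of `H(ℓ,r)` (two disjoint unit-weight cliques `A`,
`B` of sizes `ℓ`, `r`) whose top split divides `A` as `(ℓ₁, ℓ₂)` and `B` as
`(r₁, r₂)` costs at least `C(ℓ,r) + ℓ₁ℓ₂r + r₁r₂ℓ`. -/
theorem two_cliques_nonlaminar_split (ℓ r : ℕ) (L R : HTree (ℓ + r))
    (hT : (HTree.node L R).IsFullTree) :
    ((ℓ : ℝ) ^ 3 - ℓ) / 3 + ((r : ℝ) ^ 3 - r) / 3
      + ((L.leaves.filter (fun i => i.val < ℓ)).card : ℝ)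
          * ((R.leaves.filter (fun i => i.val < ℓ)).card : ℝ) * r
      + ((L.leaves.filter (fun i => ℓ ≤ i.val)).card : ℝ)
          * ((R.leaves.filter (fun i => ℓ ≤ i.val)).card : ℝ) * ℓ
    ≤ (HTree.node L R).pairCost (fun i j =>
        if i ≠ j ∧ ((i.val < ℓ ∧ j.val < ℓ) ∨ (ℓ ≤ i.val ∧ ℓ ≤ j.val)) then 1 else 0) := by
  obtain ⟨hnd, hfull⟩ := hT
  have hA : #({i | i.val < ℓ} : Finset (Fin (ℓ + r))) = ℓ := by
    simp [Fin.card_filter_val_lt]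
  have hB : #({i | ℓ ≤ i.val} : Finset (Fin (ℓ + r))) = r := by
    have := card_filter_add_card_filter_not (s := univ) (fun i : Fin (ℓ + r) => i.val < ℓ)
    simp only [not_lt, card_univ, Fintype.card_fin, hA] at this
    omega
  have hN : #(L.leaves ∪ R.leaves) = ℓ + r := by
    rw [← HTree.leaves_node, hfull, card_univ, Fintype.card_fin]
  have costA := HTree.card_pow_three_sub_add_le_sum_lcaSize_node hnd
    (S := {i | i.val < ℓ}) (by simp [hfull])
  have costB := HTree.card_pow_three_sub_add_le_sum_lcaSize_node hnd
    (S := {i | ℓ ≤ i.val}) (by simp [hfull])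
  simp only [filter_inter, univ_inter, hA, hB, hN] at costA costB
  rw [HTree.pairCost_disjoint_cliques _ _ fun i hi hi' => (Nat.not_le.2 hi) hi']
  push_cast at costA costB
  linarith
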